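/- arXiv:math/0703040 — 4 statements merged into one kernel-verified Lean document; each statement's English description precedes it below -/
import Mathlib

section
/- The twisted multiplicativity relation H(cc', dd') = H(c,d)H(c',d')(c/c')²(d/d')²(c/d')^{-1}(c'/d)^{-1} for gcd(cd, c'd') = 1 gives a well-defined function H on pairs of monic polynomials, extending the prescribed values H(p^k, p^l) on prime powers; i.e., the value H(c,d) obtained by factoring c = ∏ p_i^{k_i}, d = ∏ p_i^{l_i} into prime powers is independent of the order of factorization, using the reciprocity law (x/y) = (y/x). -/
open Polynomial UniqueFactorizationMonoid Finset

/-- Over `O = F_q[t]` with `q ≡ 1 mod 4`, let `rs` be the `n`-th power residue symbol on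
monic polynomials (completely multiplicative in each argument, nonvanishing on coprime pairs,
and satisfying the reciprocity law `(x/y) = (y/x)` for coprime monic `x, y`).  Given prescribed
values `Hp p k l` on prime powers (with `Hp p 0 0 = 1`), the twisted multiplicativity relation
`H(cc', dd') = H(c,d)H(c',d')(c/c')²(d/d')²(c/d')⁻¹(c'/d)⁻¹` for `gcd(cd, c'd') = 1` gives a
well-defined function `H` on pairs of monic polynomials extending the prescribed values; i.e.
there exists a function `H` satisfying both conditions (the value obtained by factoring into
prime powers is independent of the order of factorization). -/
theorem stmt_6 {F : Type*} [Field F] [Fintype F] (n : ℕ) (hn : 1 ≤ n)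
    (hq : Fintype.card F % 4 = 1)
    (rs : Polynomial F → Polynomial F → ℂ)
    (hrs_recip : ∀ x y : Polynomial F, x.Monic → y.Monic → IsCoprime x y → rs x y = rs y x)
    (hrs_mul_num : ∀ x x' y : Polynomial F, rs (x * x') y = rs x y * rs x' y)
    (hrs_mul_den : ∀ x y y' : Polynomial F, rs x (y * y') = rs x y * rs x y')
    (hrs_ne : ∀ x y : Polynomial F, IsCoprime x y → rs x y ≠ 0)
    (hrs_one_num : ∀ y : Polynomial F, rs 1 y = 1)
    (hrs_one_den : ∀ x : Polynomial F, rs x 1 = 1)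
    (Hp : Polynomial F → ℕ → ℕ → ℂ)
    (hHp0 : ∀ p : Polynomial F, Hp p 0 0 = 1) :
    ∃ H : Polynomial F → Polynomial F → ℂ,
      (∀ (p : Polynomial F) (k l : ℕ), p.Monic → Irreducible p →
        H (p ^ k) (p ^ l) = Hp p k l) ∧
      (∀ c c' d d' : Polynomial F, c.Monic → c'.Monic → d.Monic → d'.Monic →
        IsCoprime (c * d) (c' * d') →
        H (c * c') (d * d') =
          H c d * H c' d' * rs c c' ^ 2 * rs d d' ^ 2 * (rs c d')⁻¹ * (rs c' d)⁻¹) := by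
  classical
  set v : Polynomial F → Polynomial F → ℕ := fun p c => (normalizedFactors c).count p with hv
  set P : Polynomial F → Polynomial F → Finset (Polynomial F) :=
    fun c d => (normalizedFactors c).toFinset ∪ (normalizedFactors d).toFinset with hP
  -- multiplicativity of rs in each variable
  have hnum : ∀ (y : Polynomial F) (s : Finset (Polynomial F)) (a : Polynomial F → ℕ),
      rs (∏ p ∈ s, p ^ a p) y = ∏ p ∈ s, rs p y ^ a p := by
    intro y s a
    let f : Polynomial F →* ℂ :=
      { toFun := fun x => rs x y, map_one' := hrs_one_num y,
        map_mul' := fun x x' => hrs_mul_num x x' y }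
    calc rs (∏ p ∈ s, p ^ a p) y = f (∏ p ∈ s, p ^ a p) := rfl
      _ = ∏ p ∈ s, f (p ^ a p) := map_prod f _ s
      _ = ∏ p ∈ s, rs p y ^ a p := Finset.prod_congr rfl fun p _ => map_pow f p (a p)
  have hden : ∀ (x : Polynomial F) (t : Finset (Polynomial F)) (b : Polynomial F → ℕ),
      rs x (∏ q ∈ t, q ^ b q) = ∏ q ∈ t, rs x q ^ b q := by
    intro x t b
    let f : Polynomial F →* ℂ :=
      { toFun := fun y => rs x y, map_one' := hrs_one_den x,
        map_mul' := fun y y' => hrs_mul_den x y y' }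
    calc rs x (∏ q ∈ t, q ^ b q) = f (∏ q ∈ t, q ^ b q) := rfl
      _ = ∏ q ∈ t, f (q ^ b q) := map_prod f _ t
      _ = ∏ q ∈ t, rs x q ^ b q := Finset.prod_congr rfl fun q _ => map_pow f q (b q)
  have hexp : ∀ (s t : Finset (Polynomial F)) (a b : Polynomial F → ℕ),
      rs (∏ p ∈ s, p ^ a p) (∏ q ∈ t, q ^ b q)
        = ∏ p ∈ s, ∏ q ∈ t, rs p q ^ ((a p : ℤ) * (b q : ℤ)) := by
    intro s t a b
    rw [hnum]
    refine Finset.prod_congr rfl fun p _ => ?_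
    rw [hden, ← Finset.prod_pow]
    refine Finset.prod_congr rfl fun q _ => ?_
    rw [← pow_mul, ← zpow_natCast]
    push_cast
    ring_nf
  -- facts about normalized factors
  have hfac : ∀ (x : Polynomial F), ∀ p ∈ normalizedFactors x, Irreducible p ∧ p.Monic ∧ p ∣ x := by
    intro x p hpx
    have hirr := irreducible_of_normalized_factor p hpx
    refine ⟨hirr, ?_, dvd_of_mem_normalizedFactors hpx⟩
    rw [← normalize_normalized_factor p hpx]
    exact monic_normalize hirr.ne_zero
  have hrepr : ∀ (x : Polynomial F), x.Monic → ∀ s : Finset (Polynomial F),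
      (normalizedFactors x).toFinset ⊆ s → x = ∏ p ∈ s, p ^ v p x := by
    intro x hx s hs
    have hm : ((normalizedFactors x).prod).Monic := by
      refine Multiset.prod_induction _ _ (fun a b ha hb => ha.mul hb) monic_one ?_
      intro p hp; exact (hfac x p hp).2.1
    have h1 : (normalizedFactors x).prod = x :=
      eq_of_monic_of_associated hm hx (prod_normalizedFactors hx.ne_zero)
    conv_lhs => rw [← h1, Finset.prod_multiset_count (normalizedFactors x)]
    refine Finset.prod_subset hs ?_
    intro p _ hpn
    have h0 : Multiset.count p (normalizedFactors x) = 0 :=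
      Multiset.count_eq_zero.mpr fun hmem => hpn (Multiset.mem_toFinset.mpr hmem)
    have h0' : v p x = 0 := h0
    simp only [hv, h0, h0', pow_zero]
  refine ⟨fun c d => (∏ p ∈ P c d, Hp p (v p c) (v p d)) *
      ∏ p ∈ P c d, ∏ q ∈ P c d,
        if p = q then 1
        else rs p q ^ ((v p c : ℤ) * (v q c : ℤ) + (v p d : ℤ) * (v q d : ℤ)
          - (v p c : ℤ) * (v q d : ℤ)), ?_, ?_⟩
  · -- prime powers
    intro p k l hm hirr
    have hnf : ∀ m : ℕ, normalizedFactors (p ^ m) = Multiset.replicate m p := by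
      intro m
      rw [normalizedFactors_pow, normalizedFactors_irreducible hirr, hm.normalize_eq_self]
      exact Multiset.nsmul_singleton _ _
    have hv' : ∀ m : ℕ, v p (p ^ m) = m := by
      intro m; simp [hv, hnf, Multiset.count_replicate_self]
    have hv1 : v p 1 = 0 := by
      simp [hv, normalizedFactors_one]
    simp only [hP, hnf]
    by_cases hk : k = 0 <;> by_cases hl : l = 0 <;>
      simp [hk, hl, Multiset.toFinset_replicate, hHp0, hv', hv1]
  · intro c c' d d' hc hc' hd hd' hcop
    dsimp only
    have hc0 : c ≠ 0 := hc.ne_zero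
    have hc'0 : c' ≠ 0 := hc'.ne_zero
    have hd0 : d ≠ 0 := hd.ne_zero
    have hd'0 : d' ≠ 0 := hd'.ne_zero
    have hPmem : ∀ p ∈ P c d, Irreducible p ∧ p.Monic ∧ p ∣ c * d := by
      intro p hp
      simp only [hP, Finset.mem_union, Multiset.mem_toFinset] at hp
      rcases hp with h | h
      · obtain ⟨h1, h2, h3⟩ := hfac c p h; exact ⟨h1, h2, h3.mul_right d⟩
      · obtain ⟨h1, h2, h3⟩ := hfac d p h; exact ⟨h1, h2, h3.mul_left c⟩
    have hPmem' : ∀ p ∈ P c' d', Irreducible p ∧ p.Monic ∧ p ∣ c' * d' := by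
      intro p hp
      simp only [hP, Finset.mem_union, Multiset.mem_toFinset] at hp
      rcases hp with h | h
      · obtain ⟨h1, h2, h3⟩ := hfac c' p h; exact ⟨h1, h2, h3.mul_right d'⟩
      · obtain ⟨h1, h2, h3⟩ := hfac d' p h; exact ⟨h1, h2, h3.mul_left c'⟩
    have hnd : ∀ p ∈ P c d, ¬ p ∣ c' * d' := fun p hp hdvd =>
      (hPmem p hp).1.not_isUnit (hcop.isUnit_of_dvd' (hPmem p hp).2.2 hdvd)
    have hdisj : Disjoint (P c d) (P c' d') := by
      rw [Finset.disjoint_left]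
      intro p hp hp'
      exact hnd p hp (hPmem' p hp').2.2
    have hcpq : ∀ p ∈ P c d, ∀ q ∈ P c' d', IsCoprime p q := by
      intro p hp q hq
      refine (hPmem p hp).1.coprime_iff_not_dvd.mpr fun hdvd => ?_
      exact hnd p hp (hdvd.trans (hPmem' q hq).2.2)
    have hrs0 : ∀ p ∈ P c d, ∀ q ∈ P c' d', rs p q ≠ 0 :=
      fun p hp q hq => hrs_ne p q (hcpq p hp q hq)
    have hflip : ∀ p ∈ P c d, ∀ q ∈ P c' d', rs q p = rs p q := fun p hp q hq =>
      hrs_recip q p (hPmem' q hq).2.1 (hPmem p hp).2.1 (hcpq p hp q hq).symm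
    have hvc0 : ∀ p ∈ P c d, v p c' = 0 := by
      intro p hp
      simp only [hv]
      rw [Multiset.count_eq_zero]
      intro hmem
      exact hnd p hp ((dvd_of_mem_normalizedFactors hmem).mul_right d')
    have hvd0 : ∀ p ∈ P c d, v p d' = 0 := by
      intro p hp
      simp only [hv]
      rw [Multiset.count_eq_zero]
      intro hmem
      exact hnd p hp ((dvd_of_mem_normalizedFactors hmem).mul_left c')
    have hvc0' : ∀ q ∈ P c' d', v q c = 0 := by
      intro q hq
      simp only [hv]
      rw [Multiset.count_eq_zero]
      intro hmem
      exact (hPmem' q hq).1.not_isUnit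
        (hcop.isUnit_of_dvd' ((dvd_of_mem_normalizedFactors hmem).mul_right d)
          (hPmem' q hq).2.2)
    have hvd0' : ∀ q ∈ P c' d', v q d = 0 := by
      intro q hq
      simp only [hv]
      rw [Multiset.count_eq_zero]
      intro hmem
      exact (hPmem' q hq).1.not_isUnit
        (hcop.isUnit_of_dvd' ((dvd_of_mem_normalizedFactors hmem).mul_left c)
          (hPmem' q hq).2.2)
    have hvac : ∀ p, v p (c * c') = v p c + v p c' := by
      intro p; simp [hv, normalizedFactors_mul hc0 hc'0]
    have hvad : ∀ p, v p (d * d') = v p d + v p d' := by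
      intro p; simp [hv, normalizedFactors_mul hd0 hd'0]
    have hPun : P (c * c') (d * d') = P c d ∪ P c' d' := by
      simp only [hP, normalizedFactors_mul hc0 hc'0, normalizedFactors_mul hd0 hd'0,
        Multiset.toFinset_add]
      ext p
      simp only [Finset.mem_union]
      tauto
    have hcrepr : c = ∏ p ∈ P c d, p ^ v p c :=
      hrepr c hc _ Finset.subset_union_left
    have hdrepr : d = ∏ p ∈ P c d, p ^ v p d :=
      hrepr d hd _ Finset.subset_union_right
    have hc'repr : c' = ∏ p ∈ P c' d', p ^ v p c' :=
      hrepr c' hc' _ Finset.subset_union_left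
    have hd'repr : d' = ∏ p ∈ P c' d', p ^ v p d' :=
      hrepr d' hd' _ Finset.subset_union_right
    have hcc' : rs c c' = ∏ p ∈ P c d, ∏ q ∈ P c' d',
        rs p q ^ ((v p c : ℤ) * (v q c' : ℤ)) := by
      conv_lhs => rw [hcrepr, hc'repr]
      exact hexp _ _ _ _
    have hdd' : rs d d' = ∏ p ∈ P c d, ∏ q ∈ P c' d',
        rs p q ^ ((v p d : ℤ) * (v q d' : ℤ)) := by
      conv_lhs => rw [hdrepr, hd'repr]
      exact hexp _ _ _ _
    have hcd' : rs c d' = ∏ p ∈ P c d, ∏ q ∈ P c' d',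
        rs p q ^ ((v p c : ℤ) * (v q d' : ℤ)) := by
      conv_lhs => rw [hcrepr, hd'repr]
      exact hexp _ _ _ _
    have hc'd : rs c' d = ∏ p ∈ P c d, ∏ q ∈ P c' d',
        rs p q ^ ((v p d : ℤ) * (v q c' : ℤ)) := by
      have hcop1 : IsCoprime d c' := (hcop.of_mul_left_right).of_mul_right_left
      rw [hrs_recip c' d hc' hd hcop1.symm]
      conv_lhs => rw [hdrepr, hc'repr]
      exact hexp _ _ _ _
    have key : ∀ e e' : Polynomial F → Polynomial F → ℤ,
        (∏ p ∈ P c d, ∏ q ∈ P c' d', rs p q ^ e p q) *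
          (∏ p ∈ P c d, ∏ q ∈ P c' d', rs p q ^ e' p q)
          = ∏ p ∈ P c d, ∏ q ∈ P c' d', rs p q ^ (e p q + e' p q) := by
      intro e e'
      rw [← Finset.prod_mul_distrib]
      refine Finset.prod_congr rfl fun p hp => ?_
      rw [← Finset.prod_mul_distrib]
      refine Finset.prod_congr rfl fun q hq => ?_
      exact (zpow_add₀ (hrs0 p hp q hq) _ _).symm
    have keyinv : ∀ e : Polynomial F → Polynomial F → ℤ,
        (∏ p ∈ P c d, ∏ q ∈ P c' d', rs p q ^ e p q)⁻¹
          = ∏ p ∈ P c d, ∏ q ∈ P c' d', rs p q ^ (-e p q) := by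
      intro e
      rw [← Finset.prod_inv_distrib]
      refine Finset.prod_congr rfl fun p hp => ?_
      rw [← Finset.prod_inv_distrib]
      refine Finset.prod_congr rfl fun q hq => ?_
      exact (zpow_neg _ _).symm
    have hcross :
        (∏ p ∈ P c d, ∏ q ∈ P c' d',
            rs p q ^ ((v p c : ℤ) * (v q c' : ℤ) + (v p d : ℤ) * (v q d' : ℤ)
              - (v p c : ℤ) * (v q d' : ℤ))) *
          (∏ p ∈ P c d, ∏ q ∈ P c' d',
            rs p q ^ ((v q c' : ℤ) * (v p c : ℤ) + (v q d' : ℤ) * (v p d : ℤ)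
              - (v q c' : ℤ) * (v p d : ℤ)))
          = rs c c' ^ 2 * rs d d' ^ 2 * (rs c d')⁻¹ * (rs c' d)⁻¹ := by
      rw [key, pow_two, pow_two, hcc', hdd', hcd', hc'd, keyinv, keyinv,
        key, key, key, key, key]
      refine Finset.prod_congr rfl fun p hp => Finset.prod_congr rfl fun q hq => ?_
      congr 1
      ring
    have h11 : (∏ p ∈ P c d, ∏ q ∈ P c d,
          if p = q then (1 : ℂ)
          else rs p q ^ ((v p (c * c') : ℤ) * (v q (c * c') : ℤ)
            + (v p (d * d') : ℤ) * (v q (d * d') : ℤ)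
            - (v p (c * c') : ℤ) * (v q (d * d') : ℤ)))
        = ∏ p ∈ P c d, ∏ q ∈ P c d,
          if p = q then (1 : ℂ)
          else rs p q ^ ((v p c : ℤ) * (v q c : ℤ) + (v p d : ℤ) * (v q d : ℤ)
            - (v p c : ℤ) * (v q d : ℤ)) := by
      refine Finset.prod_congr rfl fun p hp => Finset.prod_congr rfl fun q hq => ?_
      simp only [hvac, hvad, hvc0 p hp, hvc0 q hq, hvd0 p hp, hvd0 q hq, add_zero]
    have h22 : (∏ p ∈ P c' d', ∏ q ∈ P c' d',
          if p = q then (1 : ℂ)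
          else rs p q ^ ((v p (c * c') : ℤ) * (v q (c * c') : ℤ)
            + (v p (d * d') : ℤ) * (v q (d * d') : ℤ)
            - (v p (c * c') : ℤ) * (v q (d * d') : ℤ)))
        = ∏ p ∈ P c' d', ∏ q ∈ P c' d',
          if p = q then (1 : ℂ)
          else rs p q ^ ((v p c' : ℤ) * (v q c' : ℤ) + (v p d' : ℤ) * (v q d' : ℤ)
            - (v p c' : ℤ) * (v q d' : ℤ)) := by
      refine Finset.prod_congr rfl fun p hp => Finset.prod_congr rfl fun q hq => ?_
      simp only [hvac, hvad, hvc0' p hp, hvc0' q hq, hvd0' p hp, hvd0' q hq, zero_add]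
    have h12 : (∏ p ∈ P c d, ∏ q ∈ P c' d',
          if p = q then (1 : ℂ)
          else rs p q ^ ((v p (c * c') : ℤ) * (v q (c * c') : ℤ)
            + (v p (d * d') : ℤ) * (v q (d * d') : ℤ)
            - (v p (c * c') : ℤ) * (v q (d * d') : ℤ)))
        = ∏ p ∈ P c d, ∏ q ∈ P c' d',
            rs p q ^ ((v p c : ℤ) * (v q c' : ℤ) + (v p d : ℤ) * (v q d' : ℤ)
              - (v p c : ℤ) * (v q d' : ℤ)) := by
      refine Finset.prod_congr rfl fun p hp => Finset.prod_congr rfl fun q hq => ?_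
      have hne : p ≠ q := fun h => Finset.disjoint_left.mp hdisj hp (h ▸ hq)
      rw [if_neg hne]
      simp only [hvac, hvad, hvc0 p hp, hvd0 p hp, hvc0' q hq, hvd0' q hq, add_zero,
        zero_add]
    have h21 : (∏ p ∈ P c' d', ∏ q ∈ P c d,
          if p = q then (1 : ℂ)
          else rs p q ^ ((v p (c * c') : ℤ) * (v q (c * c') : ℤ)
            + (v p (d * d') : ℤ) * (v q (d * d') : ℤ)
            - (v p (c * c') : ℤ) * (v q (d * d') : ℤ)))
        = ∏ p ∈ P c d, ∏ q ∈ P c' d',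
            rs p q ^ ((v q c' : ℤ) * (v p c : ℤ) + (v q d' : ℤ) * (v p d : ℤ)
              - (v q c' : ℤ) * (v p d : ℤ)) := by
      rw [Finset.prod_comm]
      refine Finset.prod_congr rfl fun p hp => Finset.prod_congr rfl fun q hq => ?_
      have hne : q ≠ p := fun h => Finset.disjoint_left.mp hdisj hp (h ▸ hq)
      rw [if_neg hne, hflip p hp q hq]
      simp only [hvac, hvad, hvc0 p hp, hvd0 p hp, hvc0' q hq, hvd0' q hq, add_zero,
        zero_add]
    have hG : (∏ p ∈ P c d ∪ P c' d', Hp p (v p (c * c')) (v p (d * d')))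
        = (∏ p ∈ P c d, Hp p (v p c) (v p d)) * ∏ p ∈ P c' d', Hp p (v p c') (v p d') := by
      rw [Finset.prod_union hdisj]
      congr 1
      · refine Finset.prod_congr rfl fun p hp => ?_
        simp only [hvac, hvad, hvc0 p hp, hvd0 p hp, add_zero]
      · refine Finset.prod_congr rfl fun p hp => ?_
        simp only [hvac, hvad, hvc0' p hp, hvd0' p hp, zero_add]
    have hfinal : ∀ G1 G2 S1 S2 X12 X21 r1 r2 r3 r4 : ℂ, X12 * X21 = r1 * r2 * r3 * r4 →
        G1 * G2 * ((S1 * X12) * (X21 * S2))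
          = G1 * S1 * (G2 * S2) * r1 * r2 * r3 * r4 := by
      intro G1 G2 S1 S2 X12 X21 r1 r2 r3 r4 h
      linear_combination G1 * G2 * S1 * S2 * h
    rw [hPun, hG]
    simp only [Finset.prod_union hdisj]
    simp only [Finset.prod_mul_distrib]
    rw [h11, h12, h21, h22]
    exact hfinal _ _ _ _ _ _ _ _ _ _ hcross
end

section
/- With notation as in Lemma on h^{(𝔭,l)}, define f^{(𝔭,l)}(x;i) = h^{(𝔭,l)}(x;i) − δ·g_{2i−l−1}(1,𝔭)·p^{(2i−l−2)_n}·x^{(2i−l−1)_n}·h^{(𝔭,l)}(x; l+1−i), where δ = 0 if l − 2i ≡ −1 mod n and δ = 1 otherwise. Then f^{(𝔭,l)} satisfies the one-variable functional equation f^{(𝔭,l)}(x;i) = (px)^{l−(l−2i)_n} f^{(𝔭,l)}(1/(p²x); i). -/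
set_option maxHeartbeats 1000000

lemma emod_eq_of' (n x c : ℤ) (h1 : 0 ≤ c) (h2 : c < n) (h3 : n ∣ x - c) :
    x % n = c := by
  obtain ⟨k, hk⟩ := h3
  have hx : x = c + n * k := by linarith
  rw [hx, Int.add_mul_emod_self_left, Int.emod_eq_of_lt h1 h2]

/-- With notation as in the Lemma on `h^{(𝔭,l)}` (so `h^{(𝔭,l)}(x;i) = ∑_{k≡i (n)} a(𝔭^k,𝔭^l)x^k`
with `a` the power series coefficients of the A₂ `p`-part
`h(x,y) = N(x,y)/((1−p^{n−1}xⁿ)(1−p^{n−1}yⁿ)(1−p^{2n−1}xⁿyⁿ))`), define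
`f^{(𝔭,l)}(x;i) = h^{(𝔭,l)}(x;i) − δ g_{2i−l−1}(1,𝔭) p^{(2i−l−2)_n} x^{(2i−l−1)_n}
h^{(𝔭,l)}(x; l+1−i)`, where `δ = 0` if `l − 2i ≡ −1 mod n` and `δ = 1` otherwise.  Then
`f^{(𝔭,l)}` satisfies the one-variable functional equation
`f^{(𝔭,l)}(x;i) = (px)^{l−(l−2i)_n} f^{(𝔭,l)}(1/(p²x); i)` (away from zeros of the
denominators; the previous Lemma and standard Gauss sum identities may be assumed). -/
theorem stmt_10 (n : ℕ) (hn : 1 ≤ n) (p : ℂ) (hp : p ≠ 0)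
    (g : ℤ → ℂ)
    (hgper : ∀ i : ℤ, g (i + n) = g i)
    (hgnorm : ∀ i : ℤ, ¬(n : ℤ) ∣ i → g i * g (-i) = p)
    (r : ℝ) (hr : 0 < r)
    (a : ℕ → ℕ → ℂ)
    (ha : ∀ x y : ℂ, ‖x‖ < r → ‖y‖ < r →
      HasSum (fun kl : ℕ × ℕ => a kl.1 kl.2 * x ^ kl.1 * y ^ kl.2)
        ((1 + g 1 * x + g 1 * y + p * g 1 * g 2 * x * y ^ 2 + p * g 1 * g 2 * x ^ 2 * y +
            p * g 1 ^ 2 * g 2 * x ^ 2 * y ^ 2) /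
          ((1 - p ^ (n - 1) * x ^ n) * (1 - p ^ (n - 1) * y ^ n) *
            (1 - p ^ (2 * n - 1) * x ^ n * y ^ n))))
    (hpl : ℕ → ℤ → ℂ → ℂ)
    (hpl_per : ∀ (l : ℕ) (i : ℤ), hpl l i = hpl l (i % n))
    (hpl_sum : ∀ (l : ℕ) (i : ℤ) (x : ℂ), ‖x‖ < r →
      HasSum (fun k : ℕ => if (k : ℤ) % n = i % n then a k l * x ^ k else 0) (hpl l i x))
    (hpl_rat : ∀ (l : ℕ) (i : ℤ), ∃ P : Polynomial ℂ, ∀ x : ℂ,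
      1 - p ^ (n - 1) * x ^ n ≠ 0 →
      hpl l i x = Polynomial.eval x P / (1 - p ^ (n - 1) * x ^ n))
    -- the previous Lemma (the functional equation for h^{(𝔭,l)}) may be assumed:
    (hFE : ∀ (l : ℕ) (i j : ℤ), 0 ≤ i → i < n → j % n = (l : ℤ) % n → ∀ x : ℂ, x ≠ 0 →
      1 - p ^ (n - 1) * x ^ n ≠ 0 → 1 - p ^ (n - 1) * (1 / (p ^ 2 * x)) ^ n ≠ 0 →
      hpl l i x =
        (p * x) ^ l *
            ((p * x) ^ ((1 : ℤ) - (-2 * i + j + 1) % n) *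
              ((1 - 1 / p) / (1 - p ^ (n - 1) * x ^ n))) *
            hpl l i (1 / (p ^ 2 * x)) +
          (p * x) ^ l *
            (-(if (n : ℤ) ∣ (2 * i - j - 1) then (-1 : ℂ) else g (2 * i - j - 1) / p) *
              (p * x) ^ ((1 : ℤ) - n) * ((1 - p ^ n * x ^ n) / (1 - p ^ (n - 1) * x ^ n))) *
            hpl l ((l : ℤ) + 1 - i) (1 / (p ^ 2 * x)))
    (fpl : ℕ → ℤ → ℂ → ℂ)
    (hfdef : ∀ (l : ℕ) (i : ℤ) (x : ℂ), fpl l i x =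
      hpl l i x -
        (if ((l : ℤ) - 2 * i) % n = (-1 : ℤ) % n then (0 : ℂ) else 1) *
          g (2 * i - (l : ℤ) - 1) * p ^ ((2 * i - (l : ℤ) - 2) % n) *
          x ^ ((2 * i - (l : ℤ) - 1) % n) * hpl l ((l : ℤ) + 1 - i) x)
    (l : ℕ) (i : ℤ) (hi0 : 0 ≤ i) (hin : i < n)
    (x : ℂ) (hx : x ≠ 0)
    (hd1 : 1 - p ^ (n - 1) * x ^ n ≠ 0)
    (hd2 : 1 - p ^ (n - 1) * (1 / (p ^ 2 * x)) ^ n ≠ 0) :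
    fpl l i x =
      (p * x) ^ ((l : ℤ) - ((l : ℤ) - 2 * i) % n) * fpl l i (1 / (p ^ 2 * x)) := by
  have hn0 : (0 : ℤ) < (n : ℤ) := by exact_mod_cast hn
  have hP : p * x ≠ 0 := mul_ne_zero hp hx
  have hy0 : (1 : ℂ) / (p ^ 2 * x) ≠ 0 := by
    simp [hp, hx]
  -- periodicity of g
  have gshift : ∀ (t : ℤ) (u : ℤ), g (u + (n : ℤ) * t) = g u := by
    intro t
    induction t using Int.induction_on with
    | zero => simp
    | succ k ih =>
      intro u
      rw [show u + (n : ℤ) * (k + 1) = (u + (n : ℤ) * k) + (n : ℤ) by ring, hgper, ih]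
    | pred k ih =>
      intro u
      rw [show u + (n : ℤ) * (-k - 1) = (u - (n : ℤ)) + (n : ℤ) * (-k) by ring, ih,
        ← hgper (u - (n : ℤ)), sub_add_cancel]
  have gper : ∀ u v : ℤ, u % (n : ℤ) = v % (n : ℤ) → g u = g v := by
    intro u v h
    have hu : g u = g (u % (n : ℤ)) := by
      conv_lhs => rw [← Int.emod_add_mul_ediv u (n : ℤ), gshift]
    have hv : g v = g (v % (n : ℤ)) := by
      conv_lhs => rw [← Int.emod_add_mul_ediv v (n : ℤ), gshift]
    rw [hu, hv, h]
  have hper' : ∀ (u v : ℤ), u % (n : ℤ) = v % (n : ℤ) → hpl l u = hpl l v := by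
    intro u v h
    rw [hpl_per l u, hpl_per l v, h]
  -- power decomposition helpers
  have hpn : p ^ n = p * p ^ (n - 1) := by
    conv_lhs => rw [show n = (n - 1) + 1 from (Nat.succ_pred_eq_of_pos hn).symm]
    rw [pow_succ]; ring
  have hPn : (p * x) ^ ((n : ℤ)) = p * p ^ (n - 1) * x ^ n := by
    rw [zpow_natCast, mul_pow, hpn]
  have hRX : p * p ^ (n - 1) * x ^ n ≠ 0 :=
    mul_ne_zero (mul_ne_zero hp (pow_ne_zero _ hp)) (pow_ne_zero _ hx)
  rcases em ((n : ℤ) ∣ 2 * i - (l : ℤ) - 1) with hdvd | hndvd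
  · -- case 1 : δ = 0
    obtain ⟨k, hk⟩ := id hdvd
    have hcond : ((l : ℤ) - 2 * i) % (n : ℤ) = (-1 : ℤ) % (n : ℤ) := by
      rw [Int.emod_eq_emod_iff_emod_sub_eq_zero,
        show ((l : ℤ) - 2 * i) - (-1) = (n : ℤ) * (-k) from by linear_combination -hk,
        Int.mul_emod_right]
    have e1 : ((l : ℤ) + 1 - i) % (n : ℤ) = i % (n : ℤ) := by
      rw [Int.emod_eq_emod_iff_emod_sub_eq_zero,
        show ((l : ℤ) + 1 - i) - i = (n : ℤ) * (-k) from by linear_combination -hk,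
        Int.mul_emod_right]
    have r1 : (-2 * i + (l : ℤ) + 1) % (n : ℤ) = 0 := by
      rw [show -2 * i + (l : ℤ) + 1 = (n : ℤ) * (-k) from by linear_combination -hk,
        Int.mul_emod_right]
    have r5 : ((l : ℤ) - 2 * i) % (n : ℤ) = (n : ℤ) - 1 :=
      emod_eq_of' _ _ _ (by omega) (by omega)
        ⟨-k - 1, by linear_combination -hk⟩
    have E1 := hFE l i (l : ℤ) hi0 hin rfl x hx hd1 hd2
    rw [hfdef, hfdef, if_pos hcond, E1, hper' ((l : ℤ) + 1 - i) i e1, r1, r5, if_pos hdvd]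
    have h2 : (p * x) ^ ((1 : ℤ) - (n : ℤ)) = (p * x) / (p * p ^ (n - 1) * x ^ n) := by
      rw [show (1 : ℤ) - (n : ℤ) = 1 + -(n : ℤ) by ring, zpow_add₀ hP, zpow_neg, hPn,
        zpow_one, div_eq_mul_inv]
    have h4 : (p * x) ^ ((l : ℤ) - ((n : ℤ) - 1)) =
        (p * x) ^ l * (p * x) / (p * p ^ (n - 1) * x ^ n) := by
      rw [show (l : ℤ) - ((n : ℤ) - 1) = ((l : ℤ) + 1) + -(n : ℤ) by ring, zpow_add₀ hP,
        zpow_add₀ hP, zpow_neg, hPn, zpow_one, zpow_natCast, div_eq_mul_inv, mul_assoc]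
    rw [h2, h4, sub_zero, zpow_one, hpn]
    field_simp
    ring
  · -- case 2 : δ = 1
    set m := (2 * i - (l : ℤ) - 1) % (n : ℤ) with hmdef
    have hm0 : 0 ≤ m := Int.emod_nonneg _ (by omega)
    have hmn : m < (n : ℤ) := Int.emod_lt_of_pos _ hn0
    have hm1 : 1 ≤ m := by
      rcases eq_or_lt_of_le hm0 with h | h
      · exact absurd (Int.dvd_of_emod_eq_zero h.symm) hndvd
      · omega
    obtain ⟨k, hk⟩ : (n : ℤ) ∣ (2 * i - (l : ℤ) - 1) - m := Int.dvd_self_sub_of_emod_eq rfl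
    set i' := ((l : ℤ) + 1 - i) % (n : ℤ) with hi'def
    have hi'0 : 0 ≤ i' := Int.emod_nonneg _ (by omega)
    have hi'n : i' < (n : ℤ) := Int.emod_lt_of_pos _ hn0
    obtain ⟨k', hk'⟩ : (n : ℤ) ∣ ((l : ℤ) + 1 - i) - i' := Int.dvd_self_sub_of_emod_eq rfl
    -- index congruences
    have e1 : ((l : ℤ) + 1 - i) % (n : ℤ) = i' % (n : ℤ) := by
      rw [Int.emod_eq_of_lt hi'0 hi'n]
    have e2 : ((l : ℤ) + 1 - i') % (n : ℤ) = i % (n : ℤ) := by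
      rw [Int.emod_eq_of_lt hi0 hin]
      exact emod_eq_of' _ _ _ hi0 hin ⟨k', by linear_combination hk'⟩
    -- the second index is not ≡ 0
    have hndvd' : ¬ (n : ℤ) ∣ 2 * i' - (l : ℤ) - 1 := by
      rintro ⟨t, ht⟩
      exact hndvd ⟨-t - 2 * k', by linear_combination -ht - 2 * hk'⟩
    -- δ-condition is false
    have hcond : ¬ ((l : ℤ) - 2 * i) % (n : ℤ) = (-1 : ℤ) % (n : ℤ) := by
      have r5 : ((l : ℤ) - 2 * i) % (n : ℤ) = (n : ℤ) - m - 1 :=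
        emod_eq_of' _ _ _ (by omega) (by omega) ⟨-k - 1, by linear_combination -hk⟩
      have rneg : (-1 : ℤ) % (n : ℤ) = (n : ℤ) - 1 :=
        emod_eq_of' _ _ _ (by omega) (by omega) ⟨-1, by ring⟩
      rw [r5, rneg]
      omega
    have r5 : ((l : ℤ) - 2 * i) % (n : ℤ) = (n : ℤ) - m - 1 :=
      emod_eq_of' _ _ _ (by omega) (by omega) ⟨-k - 1, by linear_combination -hk⟩
    have r1 : (-2 * i + (l : ℤ) + 1) % (n : ℤ) = (n : ℤ) - m :=
      emod_eq_of' _ _ _ (by omega) (by omega) ⟨-k - 1, by linear_combination -hk⟩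
    have r2 : (-2 * i' + (l : ℤ) + 1) % (n : ℤ) = m :=
      emod_eq_of' _ _ _ (by omega) (by omega) ⟨2 * k' + k, by linear_combination 2*hk' + hk⟩
    have r3 : (2 * i - (l : ℤ) - 2) % (n : ℤ) = m - 1 :=
      emod_eq_of' _ _ _ (by omega) (by omega) ⟨k, by linear_combination hk⟩
    -- Gauss sums
    have hGa : g (2 * i - (l : ℤ) - 1) ≠ 0 := by
      intro h0
      have := hgnorm (2 * i - (l : ℤ) - 1) hndvd
      rw [h0, zero_mul] at this
      exact hp this.symm
    have ggI : g (2 * i' - (l : ℤ) - 1) = p / g (2 * i - (l : ℤ) - 1) := by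
      have hgg : g (2 * i' - (l : ℤ) - 1) = g (-(2 * i - (l : ℤ) - 1)) := by
        apply gper
        rw [Int.emod_eq_emod_iff_emod_sub_eq_zero,
          show (2 * i' - (l : ℤ) - 1) - (-(2 * i - (l : ℤ) - 1)) = (n : ℤ) * (-2 * k') from by
            linear_combination -2 * hk',
          Int.mul_emod_right]
      rw [hgg, eq_div_iff hGa, mul_comm]
      exact hgnorm _ hndvd
    -- functional equations
    have E1 := hFE l i (l : ℤ) hi0 hin rfl x hx hd1 hd2
    have E2 := hFE l i' (l : ℤ) hi'0 hi'n rfl x hx hd1 hd2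
    rw [hfdef, hfdef, if_neg hcond, E1, hper' ((l : ℤ) + 1 - i) i' e1, E2,
      hper' ((l : ℤ) + 1 - i') i e2, if_neg hndvd, if_neg hndvd', ggI, r1, r2, r3, r5]
    -- power decompositions
    have h1 : (p * x) ^ ((1 : ℤ) - ((n : ℤ) - m)) =
        (p * x) * (p * x) ^ m / (p * p ^ (n - 1) * x ^ n) := by
      rw [show (1 : ℤ) - ((n : ℤ) - m) = (1 + m) + -(n : ℤ) by ring, zpow_add₀ hP,
        zpow_add₀ hP, zpow_neg, hPn, zpow_one, div_eq_mul_inv]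
    have h2 : (p * x) ^ ((1 : ℤ) - (n : ℤ)) = (p * x) / (p * p ^ (n - 1) * x ^ n) := by
      rw [show (1 : ℤ) - (n : ℤ) = 1 + -(n : ℤ) by ring, zpow_add₀ hP, zpow_neg, hPn,
        zpow_one, div_eq_mul_inv]
    have h3 : (p * x) ^ ((1 : ℤ) - m) = (p * x) / (p * x) ^ m := by
      rw [show (1 : ℤ) - m = 1 + -m by ring, zpow_add₀ hP, zpow_neg, zpow_one,
        div_eq_mul_inv]
    have h4 : (p * x) ^ ((l : ℤ) - ((n : ℤ) - m - 1)) =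
        (p * x) ^ l * (p * x) ^ m * (p * x) / (p * p ^ (n - 1) * x ^ n) := by
      rw [show (l : ℤ) - ((n : ℤ) - m - 1) = (((l : ℤ) + m) + 1) + -(n : ℤ) by ring,
        zpow_add₀ hP, zpow_add₀ hP, zpow_add₀ hP, zpow_neg, hPn, zpow_one, zpow_natCast,
        div_eq_mul_inv]
    have h5 : p ^ (m - 1) = p ^ m / p := by
      rw [show m - 1 = m + -1 by ring, zpow_add₀ hp, zpow_neg, zpow_one, div_eq_mul_inv]
    have h6 : x ^ m = (p * x) ^ m / p ^ m := by
      rw [mul_zpow, mul_comm, mul_div_assoc, div_self (zpow_ne_zero m hp), mul_one]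
    have h7 : (1 / (p ^ 2 * x)) ^ m = 1 / (p ^ m * (p * x) ^ m) := by
      rw [div_zpow, one_zpow, show p ^ 2 * x = p * (p * x) from by ring, mul_zpow]
    have hB : (p * x) ^ m ≠ 0 := zpow_ne_zero m hP
    have hq : p ^ m ≠ 0 := zpow_ne_zero m hp
    rw [h1, h2, h3, h4, h5, h6, h7, hpn]
    set H1 := hpl l i (1 / (p ^ 2 * x)) with hH1
    set H2 := hpl l i' (1 / (p ^ 2 * x)) with hH2
    set G := g (2 * i - (l : ℤ) - 1) with hG
    set B := (p * x) ^ m with hBdef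
    set q := p ^ m with hqdef
    set A := (p * x) ^ l with hAdef
    set R := p ^ (n - 1) with hRdef
    set X := x ^ n with hXdef
    have hD' : 1 - R * X ≠ 0 := hd1
    have hR : R ≠ 0 := by rw [hRdef]; exact pow_ne_zero _ hp
    have hX : X ≠ 0 := by rw [hXdef]; exact pow_ne_zero _ hx
    clear_value H1 H2 G B q A R X
    have rp : p * p⁻¹ = (1:ℂ) := mul_inv_cancel₀ hp
    have rq : q * q⁻¹ = (1:ℂ) := mul_inv_cancel₀ hq
    have rG : G * G⁻¹ = (1:ℂ) := mul_inv_cancel₀ hGa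
    have rR : R * R⁻¹ = (1:ℂ) := mul_inv_cancel₀ hR
    have rB : B * B⁻¹ = (1:ℂ) := mul_inv_cancel₀ hB
    have rX : X * X⁻¹ = (1:ℂ) := mul_inv_cancel₀ hX
    have C1 : A * (p * x * B / (p * R * X) * ((1 - 1 / p) / (1 - R * X))) -
        1 * G * (q / p) * (B / q) *
          (A * (-(p / G / p) * (p * x / (p * R * X)) * ((1 - p * R * X) / (1 - R * X)))) =
        A * B * (p * x) / (p * R * X) := by
      have comb : A * (p * x * B / (p * R * X) * ((1 - 1 / p) / (1 - R * X))) -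
          1 * G * (q / p) * (B / q) *
            (A * (-(p / G / p) * (p * x / (p * R * X)) * ((1 - p * R * X) / (1 - R * X)))) =
          (A * (p * x * B / (p * R * X)) * (1 - 1 / p) +
            G * (q / p) * (B / q) * (A * (p / G / p) * (p * x / (p * R * X)) *
              (1 - p * R * X))) / (1 - R * X) := by ring
      rw [comb, div_eq_iff hD']
      linear_combination ((-1 : ℂ)*A*B*x*p⁻¹*R⁻¹*X⁻¹ + A*B*x*R*X*R⁻¹*X⁻¹ + A*B*q*G*x*p⁻¹*q⁻¹*G⁻¹*R⁻¹*X⁻¹ + (-1 : ℂ)*A*B*q*G*x*R*X*q⁻¹*G⁻¹*R⁻¹*X⁻¹ + A*B*q*G*p*x*p⁻¹^2*q⁻¹*G⁻¹*R⁻¹*X⁻¹ + (-1 : ℂ)*A*B*q*G*p*x*R*X*p⁻¹*q⁻¹*G⁻¹*R⁻¹*X⁻¹ + (-1 : ℂ)*A*B*q*G*p^2*x*R*X*p⁻¹^2*q⁻¹*G⁻¹*R⁻¹*X⁻¹) * rp + (A*B*G*x*p⁻¹*G⁻¹*R⁻¹*X⁻¹ + (-1 : ℂ)*A*B*G*x*R*X*G⁻¹*R⁻¹*X⁻¹)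 * rq + (A*B*x*p⁻¹*R⁻¹*X⁻¹ + (-1 : ℂ)*A*B*x*R*X*R⁻¹*X⁻¹) * rG
    have C2 : A * (-(G / p) * (p * x / (p * R * X)) * ((1 - p * R * X) / (1 - R * X))) -
        1 * G * (q / p) * (B / q) * (A * (p * x / B * ((1 - 1 / p) / (1 - R * X)))) =
        A * B * (p * x) / (p * R * X) * (-(1 * G * (q / p) * (1 / (q * B)))) := by
      have comb : A * (-(G / p) * (p * x / (p * R * X)) * ((1 - p * R * X) / (1 - R * X))) -
          1 * G * (q / p) * (B / q) * (A * (p * x / B * ((1 - 1 / p) / (1 - R * X)))) =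
          (-(A * (G / p) * (p * x / (p * R * X)) * (1 - p * R * X)) -
            G * (q / p) * (B / q) * (A * (p * x / B)) * (1 - 1 / p)) / (1 - R * X) := by ring
      rw [comb, div_eq_iff hD']
      linear_combination ((-1 : ℂ)*A*G*x*p⁻¹*R⁻¹*X⁻¹ + A*G*x*R*X*R⁻¹*X⁻¹ + A*G*p*x*R*X*p⁻¹*R⁻¹*X⁻¹ + (-1 : ℂ)*A*B*q*G*x*q⁻¹*B⁻¹ + A*B*q*G*x*p⁻¹*q⁻¹*B⁻¹ + A*B*q*G*x*p⁻¹*q⁻¹*R⁻¹*X⁻¹*B⁻¹ + (-1 : ℂ)*A*B*q*G*x*R*X*p⁻¹*q⁻¹*R⁻¹*X⁻¹*B⁻¹) * rp + ((-1 : ℂ)*A*B*G*x*B⁻¹ + A*B*G*x*p⁻¹*B⁻¹ + A*B*G*x*p⁻¹*R⁻¹*X⁻¹*B⁻¹ + (-1 : ℂ)*A*B*G*x*R*X*p⁻¹*R⁻¹*X⁻¹*B⁻¹) * rq + (A*G*x*X*X⁻¹ + (-1 : ℂ)*A*B*G*x*X*p⁻¹*X⁻¹*B⁻¹) * rR + (A*G*x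 + (-1 : ℂ)*A*B*G*x*p⁻¹*B⁻¹) * rX + ((-1 : ℂ)*A*G*x + A*G*x*p⁻¹*R⁻¹*X⁻¹) * rB
    linear_combination C1 * H1 + C2 * H2
end

section
/- Let m₁, m₂, 𝔭 be pairwise coprime monic polynomials with 𝔭 prime of norm p. Viewing the Kubota series as formal Dirichlet series in p^{-s} and similar variables, we have D_{m₁}(s, m₂𝔭^i) = D_{𝔭m₁}(s, m₂𝔭^i) + (g(m₂𝔭^i, 𝔭^{i+1})/p^{(i+1)s})·D_{𝔭m₁}(s, m₂𝔭^{(n−i−2)_n}) for 0 ≤ i ≤ n−1, where D_S(s,m) = (1−q^{n−ns})^{-1} Σ_{d monic, gcd(d,S)=1} g(m,d)/|d|^s. -/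
open scoped Classical

/-- The norm `|d| = q^{deg d}` of a polynomial over `F_q`, as a complex number. -/
noncomputable def polyNorm {F : Type*} [Field F] [Fintype F] (d : Polynomial F) : ℂ :=
  (Fintype.card F : ℂ) ^ d.natDegree

/-- The Kubota Dirichlet series away from `S = {primes dividing m₀}`:
`D_{m₀}(s, m) = (1 − q^{n−ns})⁻¹ ∑_{d monic, gcd(d,m₀)=1} g(m,d)/|d|^s`. -/
noncomputable def kubotaD {F : Type*} [Field F] [Fintype F] (n : ℕ)
    (g : Polynomial F → Polynomial F → ℂ) (m₀ : Polynomial F) (s : ℂ)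
    (m : Polynomial F) : ℂ :=
  (1 - (Fintype.card F : ℂ) ^ ((n : ℂ) - n * s))⁻¹ *
    ∑' d : Polynomial F,
      if d.Monic ∧ IsCoprime d m₀ then g m d / polyNorm d ^ s else 0

/-- Let `m₁, m₂, 𝔭` be pairwise coprime monic polynomials in `O = F_q[t]` (`q ≡ 1 mod 4n`)
with `𝔭` prime of norm `p`, and `0 ≤ i ≤ n−1`.  In the region of absolute convergence,
`D_{m₁}(s, m₂𝔭^i) = D_{𝔭m₁}(s, m₂𝔭^i) + (g(m₂𝔭^i, 𝔭^{i+1})/p^{(i+1)s}) D_{𝔭m₁}(s, m₂𝔭^{(n−i−2)_n})`,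
where `g` is the `n`-th order Gauss sum (its twisted multiplicativity and the vanishing of
`g(m₂𝔭^i, 𝔭^k)` for `k ∉ {0, i+1}` may be assumed). -/
theorem stmt_13 {F : Type*} [Field F] [Fintype F] (n : ℕ) (hn : 1 ≤ n)
    (hq : Fintype.card F % (4 * n) = 1)
    (rs g : Polynomial F → Polynomial F → ℂ)
    (hg_mul : ∀ m c c' : Polynomial F, IsCoprime c c' →
      g m (c * c') = g m c * g m c' * rs c c' ^ 2)
    (hg_shift : ∀ m d a : Polynomial F, IsCoprime a d → g (a * m) d = (rs a d)⁻¹ * g m d)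
    (hrs_ord : ∀ x y : Polynomial F, IsCoprime x y → rs x y ^ n = 1)
    (m₁ m₂ p : Polynomial F) (hm₁ : m₁.Monic) (hm₂ : m₂.Monic) (hp : p.Monic)
    (hirr : Irreducible p)
    (h12 : IsCoprime m₁ m₂) (h1p : IsCoprime m₁ p) (h2p : IsCoprime m₂ p)
    (i : ℕ) (hi : i ≤ n - 1)
    (hvan : ∀ k : ℕ, 1 ≤ k → k ≠ i + 1 → g (m₂ * p ^ i) (p ^ k) = 0)
    (s : ℂ) (hs : 2 < s.re) :
    kubotaD n g m₁ s (m₂ * p ^ i) =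
      kubotaD n g (p * m₁) s (m₂ * p ^ i) +
        g (m₂ * p ^ i) (p ^ (i + 1)) / polyNorm p ^ (((i : ℂ) + 1) * s) *
          kubotaD n g (p * m₁) s (m₂ * p ^ (((n : ℤ) - i - 2) % n).toNat) := by
  classical
  have hp0 : p ≠ 0 := hp.ne_zero
  have hpk0 : ∀ k : ℕ, (p : Polynomial F) ^ k ≠ 0 := fun k => pow_ne_zero k hp0
  have hqC : (Fintype.card F : ℂ) ≠ 0 := Nat.cast_ne_zero.mpr Fintype.card_ne_zero
  have hn0 : n ≠ 0 := by omega
  -- master cpow lemma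
  have hQ : ∀ (m : ℕ) (c : ℂ), ((Fintype.card F : ℂ) ^ m) ^ c
      = (Fintype.card F : ℂ) ^ ((m : ℂ) * c) := by
    intro m c
    have him0 : (Complex.log (Fintype.card F : ℂ)).im = 0 := by
      rw [← Complex.natCast_log]; exact Complex.ofReal_im _
    have him : (Complex.log (Fintype.card F : ℂ) * (m : ℂ)).im = 0 := by
      simp [Complex.mul_im, him0]
    rw [← Complex.cpow_natCast (Fintype.card F : ℂ) m, ← Complex.cpow_mul]
    · rw [him]; linarith [Real.pi_pos]
    · rw [him]; linarith [Real.pi_pos]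
  set j : ℕ := (((n : ℤ) - i - 2) % n).toNat with hjdef
  set M : Polynomial F := m₂ * p ^ i with hMdef
  set M' : Polynomial F := m₂ * p ^ j with hM'def
  -- norm splitting
  have hkeyN : ∀ d' : Polynomial F, d' ≠ 0 →
      polyNorm (p ^ (i+1) * d') ^ s = polyNorm p ^ (((i:ℂ)+1) * s) * polyNorm d' ^ s := by
    intro d' hd'
    simp only [polyNorm]
    rw [Polynomial.natDegree_mul (hpk0 (i+1)) hd', Polynomial.natDegree_pow,
      hQ, hQ, hQ, ← Complex.cpow_add _ _ hqC]
    congr 1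
    push_cast
    ring
  -- coprimality dictionary
  have hcop_iff : ∀ d : Polynomial F, IsCoprime p d ↔ ¬ p ∣ d := fun d =>
    hirr.coprime_iff_not_dvd
  -- shift iterate
  have hshift : ∀ (k : ℕ) (d' : Polynomial F), IsCoprime p d' →
      g (m₂ * p ^ k) d' = ((rs p d')⁻¹) ^ k * g m₂ d' := by
    intro k d' hc
    induction k with
    | zero => simp
    | succ k ih =>
      have h1 : m₂ * p ^ (k+1) = p * (m₂ * p ^ k) := by ring
      rw [h1, hg_shift _ _ _ hc, ih]
      ring
  have hζfact : ∀ d' : Polynomial F, IsCoprime p d' → rs p d' ≠ 0 ∧ ‖rs p d'‖ = 1 := by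
    intro d' hc
    have h1 := hrs_ord p d' hc
    have h2 : ‖rs p d'‖ = 1 := Complex.norm_eq_one_of_pow_eq_one h1 hn0
    refine ⟨fun h => ?_, h2⟩
    rw [h, zero_pow hn0] at h1
    exact zero_ne_one h1
  have hnormg : ∀ (k : ℕ) (d' : Polynomial F), IsCoprime p d' →
      ‖g (m₂ * p ^ k) d'‖ = ‖g m₂ d'‖ := by
    intro k d' hc
    rw [hshift k d' hc, norm_mul, norm_pow, norm_inv, (hζfact d' hc).2]
    simp
  -- mod-n arithmetic
  have hjdvd : ∃ t : ℕ, i + 2 + j = n * t := by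
    have hn0' : (n:ℤ) ≠ 0 := Int.natCast_ne_zero.mpr hn0
    have h1 : (n:ℤ) ∣ ((i:ℤ) + 2 + (j:ℤ)) := by
      rw [hjdef, Int.toNat_of_nonneg (Int.emod_nonneg _ hn0'), Int.emod_def]
      exact ⟨1 - (((n:ℤ) - i - 2)/n), by ring⟩
    have h2 : n ∣ (i + 2 + j) := by exact_mod_cast h1
    exact h2
  -- key rs identity
  have hL4 : ∀ d' : Polynomial F, IsCoprime p d' →
      rs (p ^ (i+1)) d' ^ 2 * g M d' = g M' d' := by
    intro d' hc
    obtain ⟨hζ0, -⟩ := hζfact d' hc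
    have hζn : rs p d' ^ n = 1 := hrs_ord p d' hc
    by_cases hg0 : g m₂ d' = 0
    · rw [hMdef, hM'def, hshift i d' hc, hshift j d' hc, hg0]; ring
    · have hcp : IsCoprime (p ^ (i+1)) d' := hc.pow_left
      have e1 : (rs (p ^ (i+1)) d')⁻¹ * g m₂ d' = ((rs p d')⁻¹) ^ (i+1) * g m₂ d' := by
        rw [← hg_shift m₂ d' _ hcp, show p ^ (i+1) * m₂ = m₂ * p ^ (i+1) from mul_comm _ _,
          hshift (i+1) d' hc]
      have e2 : rs (p ^ (i+1)) d' = (rs p d') ^ (i+1) := by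
        have h3 := mul_right_cancel₀ hg0 e1
        rw [← inv_inv (rs (p ^ (i+1)) d'), h3, inv_pow, inv_inv]
      obtain ⟨t, ht⟩ := hjdvd
      have hone : rs p d' ^ (i + 2 + j) = 1 := by rw [ht, pow_mul, hζn, one_pow]
      rw [hMdef, hM'def, hshift i d' hc, hshift j d' hc, e2, ← mul_assoc]
      congr 1
      have hz : (rs p d' ^ (i+1)) ^ 2 * rs p d' ^ j = rs p d' ^ i := by
        rw [← pow_mul, ← pow_add, show (i+1) * 2 + j = i + (i + 2 + j) from by ring,
          pow_add, hone, mul_one]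
      rw [inv_pow, inv_pow]
      field_simp
      linear_combination hz
  -- key term identity
  have hkey : ∀ d' : Polynomial F, d'.Monic → IsCoprime d' (p * m₁) →
      g M (p ^ (i+1) * d') / polyNorm (p ^ (i+1) * d') ^ s
        = (g M (p ^ (i+1)) / polyNorm p ^ (((i:ℂ)+1) * s)) * (g M' d' / polyNorm d' ^ s) := by
    intro d' hmon hcop
    have hcpd' : IsCoprime p d' := isCoprime_comm.mp (IsCoprime.mul_right_iff.mp hcop).1
    have h1 : g M (p ^ (i+1) * d') = g M (p ^ (i+1)) * (rs (p ^ (i+1)) d' ^ 2 * g M d') := by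
      rw [hg_mul M _ _ hcpd'.pow_left]; ring
    rw [h1, hL4 d' hcpd', hkeyN d' hmon.ne_zero, ← div_mul_div_comm]
  -- unfold kubotaD
  simp only [kubotaD]
  set f : Polynomial F → ℂ :=
    fun d => if d.Monic ∧ IsCoprime d m₁ then g M d / polyNorm d ^ s else 0 with hfdef
  set u : Polynomial F → ℂ :=
    fun d => if d.Monic ∧ IsCoprime d (p * m₁) then g M d / polyNorm d ^ s else 0 with hudef
  set v : Polynomial F → ℂ :=
    fun d => if d.Monic ∧ IsCoprime d (p * m₁) then g M' d / polyNorm d ^ s else 0 with hvdef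
  set c0 : ℂ := g M (p ^ (i+1)) / polyNorm p ^ (((i:ℂ)+1) * s) with hc0def
  have key : (∑' d : Polynomial F, f d)
      = (∑' d : Polynomial F, u d) + c0 * (∑' d : Polynomial F, v d) := by
    set ι : Polynomial F → Polynomial F := fun d' => p ^ (i+1) * d' with hιdef
    have hιinj : Function.Injective ι := fun a b h => mul_left_cancel₀ (hpk0 (i+1)) h
    have hpdvdι : ∀ d' : Polynomial F, p ∣ ι d' :=
      fun d' => dvd_mul_of_dvd_left (dvd_pow_self p (Nat.succ_ne_zero i)) d'
    have hcond : ∀ d : Polynomial F,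
        (d.Monic ∧ IsCoprime d (p * m₁)) → (d.Monic ∧ IsCoprime d m₁) :=
      fun d h => ⟨h.1, (IsCoprime.mul_right_iff.mp h.2).2⟩
    have huf : ∀ d : Polynomial F,
        u d = if d.Monic ∧ IsCoprime d (p * m₁) then f d else 0 := by
      intro d
      by_cases h : d.Monic ∧ IsCoprime d (p * m₁)
      · simp only [hudef, hfdef]
        rw [if_pos h, if_pos h, if_pos (hcond d h)]
      · simp only [hudef]
        rw [if_neg h, if_neg h]
    have hstruct : ∀ d : Polynomial F, d.Monic → IsCoprime d m₁ → p ∣ d →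
        g M d = 0 ∨ ∃ e, e.Monic ∧ IsCoprime e (p * m₁) ∧ d = ι e := by
      intro d hdm hdc hpd
      obtain ⟨k, e, hpe, hde⟩ := WfDvdMonoid.max_power_factor hdm.ne_zero hirr
      have hk : 1 ≤ k := by
        by_contra hk0
        apply hpe
        have hkk : k = 0 := by omega
        rw [hkk, pow_zero, one_mul] at hde
        rwa [← hde]
      have hcpe : IsCoprime p e := (hcop_iff e).mpr hpe
      have hem : e.Monic := (hp.pow k).of_mul_monic_left (hde ▸ hdm)
      by_cases hki : k = i + 1
      · right
        refine ⟨e, hem, IsCoprime.mul_right hcpe.symm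
          (hdc.of_isCoprime_of_dvd_left ⟨p ^ k, by rw [hde]; ring⟩), ?_⟩
        rw [hde, hki]
      · left
        rw [hde, hMdef, hg_mul _ _ _ (hcpe.pow_left), hvan k hk hki]
        ring
    set w : Polynomial F → ℂ := fun d => f d - u d with hwdef
    have hfw : ∀ d, f d = u d + w d := by
      intro d; simp only [hwdef]; ring
    have hwzero : ∀ d : Polynomial F, d ∉ Set.range ι → w d = 0 := by
      intro d hrange
      simp only [hwdef]
      by_cases hfc : d.Monic ∧ IsCoprime d m₁
      · by_cases hpd : p ∣ d
        · rcases hstruct d hfc.1 hfc.2 hpd with hg0 | ⟨e, h1, h2, h3⟩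
          · have hf0 : f d = 0 := by
              simp only [hfdef]; rw [if_pos hfc, hg0, zero_div]
            have hu0 : u d = 0 := by
              simp only [hudef]
              rw [if_neg]
              rintro ⟨-, hcc⟩
              exact (hcop_iff d).mp (IsCoprime.mul_right_iff.mp hcc).1.symm hpd
            rw [hf0, hu0, sub_zero]
          · exact absurd (⟨e, h3.symm⟩ : d ∈ Set.range ι) hrange
        · have hcdp : IsCoprime d (p * m₁) :=
            IsCoprime.mul_right ((hcop_iff d).mpr hpd).symm hfc.2
          rw [huf d, if_pos ⟨hfc.1, hcdp⟩]
          ring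
      · have hf0 : f d = 0 := by simp only [hfdef]; rw [if_neg hfc]
        have hu0 : u d = 0 := by
          rw [huf d, if_neg]
          intro h
          exact hfc (hcond d h)
        rw [hf0, hu0, sub_zero]
    have hsupp : Function.support w ⊆ Set.range ι := by
      intro d hd
      by_contra hrange
      exact hd (hwzero d hrange)
    have hwι : ∀ d' : Polynomial F, w (ι d') = c0 * v d' := by
      intro d'
      by_cases h' : d'.Monic ∧ IsCoprime d' (p * m₁)
      · have hdm : (ι d').Monic := (hp.pow (i+1)).mul h'.1
        have hdc : IsCoprime (ι d') m₁ :=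
          IsCoprime.mul_left (h1p.symm.pow_left) (IsCoprime.mul_right_iff.mp h'.2).2
        have hu0 : u (ι d') = 0 := by
          rw [huf, if_neg]
          rintro ⟨-, hcc⟩
          exact (hcop_iff _).mp (IsCoprime.mul_right_iff.mp hcc).1.symm (hpdvdι d')
        have hf1 : f (ι d') = g M (ι d') / polyNorm (ι d') ^ s := by
          simp only [hfdef]; rw [if_pos ⟨hdm, hdc⟩]
        simp only [hwdef]
        rw [hf1, hu0, sub_zero]
        simp only [hιdef]
        rw [hkey d' h'.1 h'.2, hc0def]
        simp only [hvdef]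
        rw [if_pos h']
      · have hv0 : v d' = 0 := by simp only [hvdef]; rw [if_neg h']
        rw [hv0, mul_zero]
        simp only [hwdef]
        by_cases hmon : d'.Monic
        · have hcopfail : ¬ IsCoprime d' (p * m₁) := fun hcc => h' ⟨hmon, hcc⟩
          by_cases hcm : IsCoprime d' m₁
          · have hpd' : p ∣ d' := by
              by_contra hnd
              exact hcopfail (IsCoprime.mul_right ((hcop_iff d').mpr hnd).symm hcm)
            have hu0 : u (ι d') = 0 := by
              rw [huf, if_neg]
              rintro ⟨-, hcc⟩
              exact (hcop_iff _).mp (IsCoprime.mul_right_iff.mp hcc).1.symm (hpdvdι d')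
            have hf0 : f (ι d') = 0 := by
              simp only [hfdef]
              by_cases hfc : (ι d').Monic ∧ IsCoprime (ι d') m₁
              · rw [if_pos hfc]
                rcases hstruct _ hfc.1 hfc.2 (hpdvdι d') with hg0 | ⟨e, hem, hec, hee⟩
                · rw [hg0, zero_div]
                · exfalso
                  have hde : d' = e := hιinj hee
                  exact (hcop_iff e).mp (IsCoprime.mul_right_iff.mp hec).1.symm
                    (hde ▸ hpd')
              · rw [if_neg hfc]
            rw [hf0, hu0, sub_zero]
          · have hnc : ¬ IsCoprime (ι d') m₁ := fun hcc =>
              hcm (hcc.of_isCoprime_of_dvd_left (dvd_mul_left d' (p ^ (i+1))))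
            have hf0 : f (ι d') = 0 := by
              simp only [hfdef]; rw [if_neg (fun hcc => hnc hcc.2)]
            have hu0 : u (ι d') = 0 := by
              rw [huf, if_neg (fun hcc => hnc (hcond _ hcc).2)]
            rw [hf0, hu0, sub_zero]
        · have hnm : ¬ (ι d').Monic := fun hm => hmon ((hp.pow (i+1)).of_mul_monic_left hm)
          have hf0 : f (ι d') = 0 := by
            simp only [hfdef]; rw [if_neg (fun hcc => hnm hcc.1)]
          have hu0 : u (ι d') = 0 := by
            rw [huf, if_neg (fun hcc => hnm hcc.1)]
          rw [hf0, hu0, sub_zero]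
    have htsum_w : ∑' d : Polynomial F, w d = c0 * ∑' d : Polynomial F, v d := by
      calc ∑' d : Polynomial F, w d = ∑' d' : Polynomial F, w (ι d') :=
            (hιinj.tsum_eq hsupp).symm
        _ = ∑' d' : Polynomial F, c0 * v d' := tsum_congr hwι
        _ = c0 * ∑' d' : Polynomial F, v d' := tsum_mul_left
    have hnuv : ∀ d, ‖u d‖ = ‖v d‖ := by
      intro d
      by_cases h : d.Monic ∧ IsCoprime d (p * m₁)
      · have hcp : IsCoprime p d := isCoprime_comm.mp (IsCoprime.mul_right_iff.mp h.2).1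
        simp only [hudef, hvdef]
        rw [if_pos h, if_pos h, norm_div, norm_div, hMdef, hM'def,
          hnormg i d hcp, hnormg j d hcp]
      · simp only [hudef, hvdef]
        rw [if_neg h, if_neg h]
    by_cases hc0 : c0 = 0
    · have hfu : ∀ d, f d = u d := by
        intro d
        by_cases hw : w d = 0
        · have h2 := hw
          simp only [hwdef] at h2
          exact sub_eq_zero.mp h2
        · obtain ⟨d', hd'⟩ := hsupp hw
          exfalso
          apply hw
          rw [← hd', hwι, hc0, zero_mul]
      rw [tsum_congr hfu, hc0, zero_mul, add_zero]
    · by_cases hv : Summable v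
      · have hnv : Summable (fun d => ‖v d‖) := summable_norm_iff.mpr hv
        have hnu : Summable (fun d => ‖u d‖) := by
          rw [show (fun d => ‖u d‖) = fun d => ‖v d‖ from funext hnuv]
          exact hnv
        have hu : Summable u := summable_norm_iff.mp hnu
        have hwsum : Summable w := by
          have h1 : Summable (w ∘ ι) := by
            have h2 : w ∘ ι = fun d' => c0 * v d' := funext hwι
            rw [h2]
            exact hv.mul_left c0
          exact (hιinj.summable_iff hwzero).mp h1
        rw [tsum_congr hfw, Summable.tsum_add hu hwsum, htsum_w]
      · have hnu : ¬ Summable u := by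
          intro hu
          apply hv
          have h2 : Summable (fun d => ‖u d‖) := summable_norm_iff.mpr hu
          rw [show (fun d => ‖u d‖) = fun d => ‖v d‖ from funext hnuv] at h2
          exact summable_norm_iff.mp h2
        have hnf : ¬ Summable f := by
          intro hf
          apply hnu
          refine Summable.of_norm_bounded (summable_norm_iff.mpr hf) ?_
          intro d
          rw [huf d]
          by_cases h : d.Monic ∧ IsCoprime d (p * m₁)
          · rw [if_pos h]
          · rw [if_neg h]
            simp [norm_nonneg]
        rw [tsum_eq_zero_of_not_summable hnf, tsum_eq_zero_of_not_summable hnu,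
          tsum_eq_zero_of_not_summable hv]
        ring
  rw [key]
  ring
end

section
/- Suppose each f^{(𝔭,l)}(x;i) satisfies f^{(𝔭,l)}(x;i) = (px)^{l−(l−2i)_n} f^{(𝔭,l)}(1/(p²x);i), and suppose D(s,m) satisfies the Kubota functional equation D(s,m) = |m|^{1−s} Σ_{i=0}^{n−1} T_{ij}(s) D(2−s, m; i) for deg m ≡ j mod n, where T_{ij}(s) depends only on 2i−j mod n. Then E(s, 𝔭^l) = Σ_j D(s, 𝔭^{(l−2j)_n}) f^{(𝔭,l)}(|𝔭|^{−s}; j) satisfies E(s, 𝔭^l) = |𝔭|^{(1−s)l} Σ_{i=0}^{n−1} T_{i, l·deg𝔭}(s) E(2−s, 𝔭^l; i). -/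
/-!
In the summand `D(s, 𝔭^k) f(|𝔭|^{-s}; j)` of `E(s, 𝔭^l)`, with `k = (l - 2j)_n`, apply the Kubota
functional equation to `D` and the functional equation to `f`. Since `deg 𝔭^k = k deg 𝔭`, the powers
of `|𝔭|` combine to `|𝔭|^{(1-s)l}`. Since `k + 2j ≡ l mod n`, shifting the summation index `i` by
`j deg 𝔭` modulo `n` turns `T_{i, k deg 𝔭}` into `T_{i, l deg 𝔭}` and `D(2-s, 𝔭^k; i)` into
`D(2-s, 𝔭^k; i - j deg 𝔭)`, which is the `j`-th term of `E(2-s, 𝔭^l; i)`.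
-/

open Finset Function

theorem Function.Periodic.sum_range_comp_sub {M : Type*} [AddCommMonoid M] {g : ℤ → M} {n : ℕ}
    (hg : Periodic g n) (c : ℤ) :
    ∑ i ∈ range n, g (i - c) = ∑ i ∈ range n, g i := by
  let h : ℤ → M := fun c => ∑ i ∈ range n, g (i + c)
  have h_periodic : Periodic h 1 := fun c => by
    rcases n with _ | m
    · simp [h]
    · rw [show h (c + 1) = ∑ i ∈ range (m + 1), g (i + (c + 1)) from rfl, sum_range_succ,
        show h c = ∑ i ∈ range (m + 1), g (i + c) from rfl,
        sum_range_succ' (fun i : ℕ => g (i + c))]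
      congr 1
      · exact sum_congr rfl fun i _ => by push_cast; ring_nf
      · rw [show ((m : ℕ) : ℤ) + (c + 1) = c + (m + 1 : ℕ) by push_cast; ring, hg, Nat.cast_zero,
          zero_add]
  simpa [h, sub_eq_add_neg] using h_periodic.int_mul_eq (-c)

theorem periodic_of_eq_emod {M : Type*} {g : ℤ → M} {n : ℤ} (hg : ∀ i, g i = g (i % n)) :
    Periodic g n := fun i => by
  rw [hg, Int.add_emod_right, ← hg]

theorem sum_range_mul_comp_sub_of_modEq {R : Type*} [Semiring R] {n : ℕ} {T : ℤ → ℤ → R}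
    (hT : ∀ i a i' a', 2 * i - a ≡ 2 * i' - a' [ZMOD n] → T i a = T i' a')
    {g : ℤ → R} (hg : Periodic g n) {a a' c : ℤ} (h : a + 2 * c ≡ a' [ZMOD n]) :
    ∑ i ∈ range n, T i a * g i = ∑ i ∈ range n, T i a' * g (i - c) := by
  have hTg : Periodic (fun i => T i a * g i) n := fun i => by
    have hT_periodic : T (i + n) a = T i a :=
      hT _ _ _ _ (by simp [Int.ModEq, mul_add, sub_eq_add_neg, add_right_comm])
    simp only [hg i, hT_periodic]
  rw [← hTg.sum_range_comp_sub c]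
  refine sum_congr rfl fun i _ => congrArg (· * _) (hT _ _ _ _ ?_)
  convert (Int.ModEq.refl (2 * (i : ℤ))).sub h using 1; ring

theorem one_div_sq_mul_cpow_neg {P : ℂ} (hP : P ≠ 0) (s : ℂ) :
    1 / (P ^ 2 * P ^ (-s)) = P ^ (-(2 - s)) := by
  rw [← Complex.cpow_ofNat, ← Complex.cpow_add _ _ hP, one_div, ← Complex.cpow_neg]
  ring_nf

theorem natCast_pow_cpow_mul_mul_cpow_zpow {N : ℕ} (hN : N ≠ 0) (k l : ℕ) (s : ℂ) :
    ((N : ℂ) ^ k) ^ (1 - s) * ((N : ℂ) * (N : ℂ) ^ (-s)) ^ ((l : ℤ) - k) =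
      (N : ℂ) ^ ((1 - s) * l) := by
  have hN' : (N : ℂ) ≠ 0 := Nat.cast_ne_zero.mpr hN
  have h1 : (N : ℂ) * (N : ℂ) ^ (-s) = (N : ℂ) ^ (1 - s) := by
    rw [sub_eq_add_neg, Complex.cpow_add _ _ hN', Complex.cpow_one]
  rw [h1, ← Complex.natCast_cpow_natCast_mul, Complex.cpow_nat_mul, Complex.cpow_mul_nat,
    ← zpow_natCast, ← zpow_add₀ (Complex.cpow_ne_zero_iff.mpr (Or.inl hN')), add_sub_cancel,
    zpow_natCast]

theorem stmt_16_general {F : Type*} [Field F] [Fintype F] (n : ℕ) (hn : 1 ≤ n)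
    (p : Polynomial F) (hp : p.Monic) (l : ℕ)
    (P : ℂ) (hP : P = (Fintype.card F : ℂ) ^ p.natDegree)
    (D : ℂ → Polynomial F → ℂ) (Dres : ℂ → Polynomial F → ℤ → ℂ)
    (E : ℂ → ℂ) (Eres : ℂ → ℤ → ℂ)
    (f : ℕ → ℕ → ℂ → ℂ) (T : ℤ → ℤ → ℂ → ℂ)
    -- T_{ij}(s) depends only on 2i − j mod n
    (hT : ∀ (i j i' j' : ℤ) (s : ℂ), (2 * i - j) % n = (2 * i' - j') % n →
      T i j s = T i' j' s)
    -- the functional equation of f^{(𝔭,l)}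
    (hf : ∀ (j : ℕ) (x : ℂ), x ≠ 0 →
      f l j x = (P * x) ^ ((l : ℤ) - ((l : ℤ) - 2 * j) % n) * f l j (1 / (P ^ 2 * x)))
    -- the Kubota functional equation
    (hD : ∀ m : Polynomial F, m.Monic → ∀ s : ℂ,
      D s m = ((Fintype.card F : ℂ) ^ m.natDegree) ^ ((1 : ℂ) - s) *
        ∑ i ∈ Finset.range n, T i (m.natDegree : ℤ) s * Dres (2 - s) m i)
    (hDres_per : ∀ (s : ℂ) (m : Polynomial F) (i : ℤ), Dres s m i = Dres s m (i % n))
    -- the decompositions from the previous lemma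
    (hE : ∀ s : ℂ, E s =
      ∑ j ∈ Finset.range n,
        D s (p ^ (((l : ℤ) - 2 * j) % n).toNat) * f l j (P ^ (-s)))
    (hEres : ∀ (s : ℂ) (i : ℤ), Eres s i =
      ∑ j ∈ Finset.range n,
        Dres s (p ^ (((l : ℤ) - 2 * j) % n).toNat) (i - j * p.natDegree) * f l j (P ^ (-s)))
    (s : ℂ) :
    E s = P ^ (((1 : ℂ) - s) * l) *
      ∑ i ∈ Finset.range n, T i (l * p.natDegree : ℤ) s * Eres (2 - s) i := by
  obtain ⟨N, hN0, hPN⟩ : ∃ N : ℕ, N ≠ 0 ∧ P = N :=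
    ⟨_, pow_ne_zero _ Fintype.card_ne_zero, by rw [hP, Nat.cast_pow]⟩
  have hP0 : P ≠ 0 := hPN ▸ Nat.cast_ne_zero.mpr hN0
  have hterm : ∀ j : ℕ, D s (p ^ (((l : ℤ) - 2 * j) % n).toNat) * f l j (P ^ (-s)) =
      ∑ i ∈ range n, P ^ ((1 - s) * l) * (T i (l * p.natDegree) s *
        (Dres (2 - s) (p ^ (((l : ℤ) - 2 * j) % n).toNat) (i - j * p.natDegree) *
          f l j (P ^ (-(2 - s))))) := fun j => by
    obtain ⟨k, hk⟩ : ∃ k : ℕ, (k : ℤ) = ((l : ℤ) - 2 * j) % n :=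
      ⟨_, Int.toNat_of_nonneg (Int.emod_nonneg _ (by omega))⟩
    have hk_modEq : (k * p.natDegree : ℤ) + 2 * (j * p.natDegree) ≡ l * p.natDegree [ZMOD n] := by
      have := (hk ▸ Int.mod_modEq ((l : ℤ) - 2 * j) n).add_right (2 * j)
      convert this.mul_right (p.natDegree : ℤ) using 1 <;> ring
    rw [hf j _ (Complex.cpow_ne_zero_iff.mpr (Or.inl hP0)), one_div_sq_mul_cpow_neg hP0, ← hk,
      Int.toNat_natCast, hD _ (hp.pow k), Polynomial.natDegree_pow, Nat.cast_mul,
      sum_range_mul_comp_sub_of_modEq (fun i a i' a' => hT i a i' a' s)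
        (periodic_of_eq_emod (hDres_per _ _)) hk_modEq, mul_sum, sum_mul]
    refine sum_congr rfl fun i _ => ?_
    rw [pow_mul', ← hP, hPN, ← natCast_pow_cpow_mul_mul_cpow_zpow hN0 k l s]
    ring
  rw [hE, sum_congr rfl fun j _ => hterm j, mul_sum, sum_comm]
  simp only [hEres, mul_sum]

/-- Suppose each `f^{(𝔭,l)}(x;i)` satisfies `f^{(𝔭,l)}(x;i) = (px)^{l−(l−2i)_n}
f^{(𝔭,l)}(1/(p²x); i)`, and suppose the Kubota series `D(s,m)` satisfies
`D(s,m) = |m|^{1−s} ∑_{i=0}^{n−1} T_{ij}(s) D(2−s, m; i)` for `deg m ≡ j mod n`, where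
`T_{ij}(s)` depends only on `2i−j mod n`.  Then
`E(s, 𝔭^l) = ∑_j D(s, 𝔭^{(l−2j)_n}) f^{(𝔭,l)}(|𝔭|^{−s}; j)` satisfies
`E(s, 𝔭^l) = |𝔭|^{(1−s)l} ∑_{i=0}^{n−1} T_{i, l·deg 𝔭}(s) E(2−s, 𝔭^l; i)`.
(The decompositions of `E` and of its pieces `E(s,𝔭^l;i)` in terms of `D`, `D(s,m;i)` and
`f^{(𝔭,l)}` from the previous lemma may be assumed.) -/
theorem stmt_16 {F : Type*} [Field F] [Fintype F] (n : ℕ) (hn : 1 ≤ n)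
    (hq : Fintype.card F % (4 * n) = 1)
    (p : Polynomial F) (hp : p.Monic) (hirr : Irreducible p) (l : ℕ)
    (P : ℂ) (hP : P = (Fintype.card F : ℂ) ^ p.natDegree)
    (D : ℂ → Polynomial F → ℂ) (Dres : ℂ → Polynomial F → ℤ → ℂ)
    (E : ℂ → ℂ) (Eres : ℂ → ℤ → ℂ)
    (f : ℕ → ℕ → ℂ → ℂ) (T : ℤ → ℤ → ℂ → ℂ)
    -- T_{ij}(s) depends only on 2i − j mod n
    (hT : ∀ (i j i' j' : ℤ) (s : ℂ), (2 * i - j) % n = (2 * i' - j') % n →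
      T i j s = T i' j' s)
    -- the functional equation of f^{(𝔭,l)}
    (hf : ∀ (j : ℕ) (x : ℂ), x ≠ 0 →
      f l j x = (P * x) ^ ((l : ℤ) - ((l : ℤ) - 2 * j) % n) * f l j (1 / (P ^ 2 * x)))
    -- the Kubota functional equation
    (hD : ∀ m : Polynomial F, m.Monic → ∀ s : ℂ,
      D s m = ((Fintype.card F : ℂ) ^ m.natDegree) ^ ((1 : ℂ) - s) *
        ∑ i ∈ Finset.range n, T i (m.natDegree : ℤ) s * Dres (2 - s) m i)
    (hDres_per : ∀ (s : ℂ) (m : Polynomial F) (i : ℤ), Dres s m i = Dres s m (i % n))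
    -- the decompositions from the previous lemma
    (hE : ∀ s : ℂ, E s =
      ∑ j ∈ Finset.range n,
        D s (p ^ (((l : ℤ) - 2 * j) % n).toNat) * f l j (P ^ (-s)))
    (hEres : ∀ (s : ℂ) (i : ℤ), Eres s i =
      ∑ j ∈ Finset.range n,
        Dres s (p ^ (((l : ℤ) - 2 * j) % n).toNat) (i - j * p.natDegree) * f l j (P ^ (-s)))
    (s : ℂ) :
    E s = P ^ (((1 : ℂ) - s) * l) *
      ∑ i ∈ Finset.range n, T i (l * p.natDegree : ℤ) s * Eres (2 - s) i :=
  stmt_16_general n hn p hp l P hP D Dres E Eres f T hT hf hD hDres_per hE hEres s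
end
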